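/- arXiv:1403.7254 — 4 statements merged into one kernel-verified Lean document; each statement's English description precedes it below -/
import Mathlib

section
/- Let A be an m×m real symmetric positive definite matrix, b ∈ ℝ^m, q(x) = ½xᵀAx − xᵀb, x ∈ ℝ^m, g = Ax − b, and let π₁,…,π_{n̂} be the block projections of a partition of {1,…,m}. Define D_n = ⟨g, π_n(g)⟩ and H_{n,m'} = ⟨π_n(g), A π_{m'}(g)⟩. Then H is symmetric positive semidefinite; moreover, if π_n(g) ≠ 0 for every n, then H is positive definite and Θ* = −H⁻¹D is the unique minimizer over ℝ^{n̂} of Φ(Θ) = q(x + Σ_n θ_n π_n(g)). -/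
open Matrix

/-- The quadratic form `q(x) = ½ xᵀAx − xᵀb`. -/
noncomputable def quadForm {m : ℕ} (A : Matrix (Fin m) (Fin m) ℝ) (b x : Fin m → ℝ) : ℝ :=
  (1 / 2 : ℝ) * (x ⬝ᵥ A.mulVec x) - x ⬝ᵥ b

/-- Block projection associated with the partition of `Fin m` given by the fibers of
`P : Fin m → Fin nh`. -/
def blockProj {m nh : ℕ} (P : Fin m → Fin nh) (k : Fin nh) (x : Fin m → ℝ) : Fin m → ℝ :=
  fun i => if P i = k then x i else 0

/-! Let `M` be the `m × n̂` matrix whose columns are the blocks `πₙ(g)`. Then `H = Mᵀ A M`,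
`D = Mᵀ g` and `Φ(Θ) = q(x + MΘ) = q(x) + ½ Θᵀ H Θ + Dᵀ Θ`. Hence `H` is positive semidefinite
as a congruence of `A`, and positive definite as soon as `M` is injective, which is the case when
no block of `g` vanishes since the blocks have disjoint supports. `Φ` is then a strictly convex
quadratic whose only critical point is `−H⁻¹ D`. -/

theorem Matrix.IsSymm.dotProduct_mulVec_comm {n R : Type*} [Fintype n] [CommSemiring R]
    {A : Matrix n n R} (hA : A.IsSymm) (u v : n → R) : u ⬝ᵥ A *ᵥ v = v ⬝ᵥ A *ᵥ u := by
  conv_lhs => rw [← hA.eq]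
  exact dotProduct_transpose_mulVec A u v

theorem quadForm_add {k : ℕ} {A : Matrix (Fin k) (Fin k) ℝ} (hA : A.IsSymm) (b x v : Fin k → ℝ) :
    quadForm A b (x + v) = quadForm A b x + (A *ᵥ x - b) ⬝ᵥ v + 1 / 2 * (v ⬝ᵥ A *ᵥ v) := by
  simp only [quadForm, mulVec_add, dotProduct_add, add_dotProduct, sub_dotProduct]
  rw [hA.dotProduct_mulVec_comm x v, dotProduct_comm (A *ᵥ x) v, dotProduct_comm b v]
  ring

theorem quadForm_add_mulVec {k l : ℕ} {A : Matrix (Fin k) (Fin k) ℝ} (hA : A.IsSymm)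
    (b x : Fin k → ℝ) (M : Matrix (Fin k) (Fin l) ℝ) (c : Fin l → ℝ) :
    quadForm A b (x + M *ᵥ c) =
      quadForm A b x + quadForm (Mᵀ * A * M) (-(Mᵀ *ᵥ (A *ᵥ x - b))) c := by
  rw [quadForm_add hA, add_assoc]
  congr 1
  rw [quadForm, dotProduct_neg, sub_neg_eq_add, ← mulVec_mulVec, ← mulVec_mulVec,
    dotProduct_transpose_mulVec, dotProduct_transpose_mulVec, dotProduct_comm (M *ᵥ c)]
  ring

theorem quadForm_inv_mulVec_lt {l : ℕ} {H : Matrix (Fin l) (Fin l) ℝ} (hH : H.PosDef)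
    (d : Fin l → ℝ) {c : Fin l → ℝ} (hc : c ≠ H⁻¹ *ᵥ d) :
    quadForm H d (H⁻¹ *ᵥ d) < quadForm H d c := by
  have hHsymm : H.IsSymm := isHermitian_iff_isSymm.mp hH.isHermitian
  have hcritical : H *ᵥ (H⁻¹ *ᵥ d) - d = 0 := by
    rw [mulVec_mulVec, mul_nonsing_inv H (H.isUnit_iff_isUnit_det.mp hH.isUnit), one_mulVec,
      sub_self]
  have hcurv : 0 < (c - H⁻¹ *ᵥ d) ⬝ᵥ H *ᵥ (c - H⁻¹ *ᵥ d) := by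
    simpa using hH.dotProduct_mulVec_pos (sub_ne_zero.mpr hc)
  have := quadForm_add hHsymm d (H⁻¹ *ᵥ d) (c - H⁻¹ *ᵥ d)
  rw [add_sub_cancel, hcritical, zero_dotProduct] at this
  linarith

section BlockMatrix

variable {m nh : ℕ}

def blockMatrix (P : Fin m → Fin nh) (g : Fin m → ℝ) : Matrix (Fin m) (Fin nh) ℝ :=
  Matrix.of fun i n => blockProj P n g i

theorem blockMatrix_mulVec_apply (P : Fin m → Fin nh) (g : Fin m → ℝ) (c : Fin nh → ℝ)
    (i : Fin m) :
    (blockMatrix P g *ᵥ c) i = c (P i) * g i := by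
  simp [blockMatrix, blockProj, mulVec, dotProduct, mul_comm]

theorem blockMatrix_mulVec (P : Fin m → Fin nh) (g : Fin m → ℝ) (c : Fin nh → ℝ) :
    blockMatrix P g *ᵥ c = ∑ n, c n • blockProj P n g := by
  ext i
  simp [blockMatrix_mulVec_apply, blockProj]

theorem transpose_blockMatrix_mulVec (P : Fin m → Fin nh) (g v : Fin m → ℝ) (n : Fin nh) :
    ((blockMatrix P g)ᵀ *ᵥ v) n = blockProj P n g ⬝ᵥ v := rfl

theorem transpose_blockMatrix_mul_mul_apply (P : Fin m → Fin nh) (g : Fin m → ℝ)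
    (A : Matrix (Fin m) (Fin m) ℝ) (n n' : Fin nh) :
    ((blockMatrix P g)ᵀ * A * blockMatrix P g) n n' =
      blockProj P n g ⬝ᵥ A *ᵥ blockProj P n' g := by
  rw [Matrix.mul_assoc, mul_apply]
  rfl

theorem blockMatrix_mulVec_injective {P : Fin m → Fin nh} {g : Fin m → ℝ}
    (hg : ∀ n, blockProj P n g ≠ 0) : Function.Injective (blockMatrix P g).mulVec := by
  intro c c' h
  funext n
  obtain ⟨i, hi⟩ := Function.ne_iff.mp (hg n)
  have hPi : P i = n := by
    by_contra hne
    simp [blockProj, hne] at hi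
  have hgi : g i ≠ 0 := by simpa [blockProj, hPi] using hi
  have := congrFun h i
  rw [blockMatrix_mulVec_apply, blockMatrix_mulVec_apply, hPi] at this
  exact mul_right_cancel₀ hgi this

end BlockMatrix

theorem stmt_2_general {m nh : ℕ} (A : Matrix (Fin m) (Fin m) ℝ) (hA : A.PosDef)
    (b x : Fin m → ℝ)
    (P : Fin m → Fin nh)
    (g : Fin m → ℝ) (hg : g = A.mulVec x - b)
    (D : Fin nh → ℝ) (hD : ∀ n, D n = g ⬝ᵥ blockProj P n g)
    (H : Matrix (Fin nh) (Fin nh) ℝ)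
    (hH : ∀ n m', H n m' = blockProj P n g ⬝ᵥ A.mulVec (blockProj P m' g)) :
    H.IsSymm ∧ H.PosSemidef ∧
      ((∀ n, blockProj P n g ≠ 0) →
        H.PosDef ∧
          ∀ Θ : Fin nh → ℝ, Θ ≠ -(H⁻¹.mulVec D) →
            quadForm A b (x + ∑ n, (-(H⁻¹.mulVec D)) n • blockProj P n g)
              < quadForm A b (x + ∑ n, Θ n • blockProj P n g)) := by
  set M := blockMatrix P g
  have hHM : H = Mᵀ * A * M := by
    ext n n'
    rw [hH, transpose_blockMatrix_mul_mul_apply]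
  have hDM : D = Mᵀ *ᵥ g := by
    ext n
    rw [hD, transpose_blockMatrix_mulVec, dotProduct_comm]
  have hHpsd : H.PosSemidef := by
    simpa only [hHM, conjTranspose_eq_transpose_of_trivial] using
      hA.posSemidef.conjTranspose_mul_mul_same M
  refine ⟨isHermitian_iff_isSymm.mp hHpsd.isHermitian, hHpsd, fun hblocks => ?_⟩
  have hHpd : H.PosDef := by
    simpa only [hHM, conjTranspose_eq_transpose_of_trivial] using
      hA.conjTranspose_mul_mul_same (blockMatrix_mulVec_injective hblocks)
  have hΦ (c : Fin nh → ℝ) :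
      quadForm A b (x + ∑ n, c n • blockProj P n g) = quadForm A b x + quadForm H (-D) c := by
    rw [← blockMatrix_mulVec, quadForm_add_mulVec (isHermitian_iff_isSymm.mp hA.isHermitian),
      ← hg, ← hDM, ← hHM]
  refine ⟨hHpd, fun Θ hΘ => ?_⟩
  rw [hΦ, hΦ, ← mulVec_neg]
  exact add_lt_add_right (quadForm_inv_mulVec_lt hHpd (-D) (by rwa [mulVec_neg])) _

/-- The Gram–Hessian matrix `H_{n,m'} = ⟨πₙ(g), A π_{m'}(g)⟩` is symmetric positive
semidefinite; if moreover `πₙ(g) ≠ 0` for every `n`, then `H` is positive definite and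
`Θ* = −H⁻¹ D` is the unique minimizer of `Φ(Θ) = q(x + Σₙ θₙ πₙ(g))` over `ℝ^n̂`. -/
theorem stmt_2 {m nh : ℕ} (A : Matrix (Fin m) (Fin m) ℝ) (hA : A.PosDef)
    (b x : Fin m → ℝ)
    (P : Fin m → Fin nh) (hP : Function.Surjective P)
    (g : Fin m → ℝ) (hg : g = A.mulVec x - b)
    (D : Fin nh → ℝ) (hD : ∀ n, D n = g ⬝ᵥ blockProj P n g)
    (H : Matrix (Fin nh) (Fin nh) ℝ)
    (hH : ∀ n m', H n m' = blockProj P n g ⬝ᵥ A.mulVec (blockProj P m' g)) :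
    H.IsSymm ∧ H.PosSemidef ∧
      ((∀ n, blockProj P n g ≠ 0) →
        H.PosDef ∧
          ∀ Θ : Fin nh → ℝ, Θ ≠ -(H⁻¹.mulVec D) →
            quadForm A b (x + ∑ n, (-(H⁻¹.mulVec D)) n • blockProj P n g)
              < quadForm A b (x + ∑ n, Θ n • blockProj P n g)) :=
  stmt_2_general A hA b x P g hg D hD H hH
end

section
/- Let A be an m×m real symmetric positive definite matrix, b ∈ ℝ^m, q(x) = ½xᵀAx − xᵀb, x ∈ ℝ^m, and g = Ax − b. Let P and Q be two partitions of {1,…,m} into nonempty blocks such that P refines Q (every block of Q is a union of blocks of P). For a partition R with blocks R₁,…,R_r and block projections π^R_1,…,π^R_r, set Φ_R(Θ) = q(x + Σ_{n=1}^{r} θ_n π^R_n(g)) for Θ ∈ ℝ^r. Then inf over Θ ∈ ℝ^{|P|} of Φ_P(Θ) ≤ inf over Θ ∈ ℝ^{|Q|} of Φ_Q(Θ). -/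
open Matrix

/-!
Refining the partition only enlarges the family of search directions: the direction
`∑ θₙ π^Q_n(g)` of `Q` is the direction of `P` that gives every block of `P` the coefficient of
the block of `Q` containing it. The infimum over `P` is a genuine one, not the junk value of an
unbounded set, because a positive definite `A` bounds `q` below by its minimum `q(A⁻¹b)`.
-/

namespace Matrix

variable {m : ℕ}

lemma IsSymm.dotProduct_mulVec_comm_s3 {A : Matrix (Fin m) (Fin m) ℝ} (hA : A.IsSymm)
    (v w : Fin m → ℝ) : v ⬝ᵥ A *ᵥ w = A *ᵥ v ⬝ᵥ w := by
  rw [dotProduct_mulVec, ← mulVec_transpose, hA.eq]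

lemma IsSymm.quadForm_sub_quadForm {A : Matrix (Fin m) (Fin m) ℝ} (hA : A.IsSymm)
    {b z : Fin m → ℝ} (hz : A *ᵥ z = b) (y : Fin m → ℝ) :
    quadForm A b y - quadForm A b z = 1 / 2 * ((y - z) ⬝ᵥ A *ᵥ (y - z)) := by
  have hzy : z ⬝ᵥ A *ᵥ y = y ⬝ᵥ b := by
    rw [hA.dotProduct_mulVec_comm_s3, hz, dotProduct_comm]
  simp only [quadForm, mulVec_sub, sub_dotProduct, dotProduct_sub, hzy, hz]
  ring

lemma PosDef.quadForm_inv_mulVec_le {A : Matrix (Fin m) (Fin m) ℝ} (hA : A.PosDef)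
    (b y : Fin m → ℝ) : quadForm A b (A⁻¹ *ᵥ b) ≤ quadForm A b y := by
  have hsymm : A.IsSymm := isHermitian_iff_isSymm.1 hA.isHermitian
  have hz : A *ᵥ (A⁻¹ *ᵥ b) = b := by
    rw [mulVec_mulVec, mul_nonsing_inv _ hA.det_pos.ne'.isUnit, one_mulVec]
  have hnonneg := hA.posSemidef.dotProduct_mulVec_nonneg (y - A⁻¹ *ᵥ b)
  rw [star_trivial] at hnonneg
  linarith [hsymm.quadForm_sub_quadForm hz y]

lemma PosDef.bddBelow_range_quadForm {ι : Type*} {A : Matrix (Fin m) (Fin m) ℝ}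
    (hA : A.PosDef) (b : Fin m → ℝ) (f : ι → Fin m → ℝ) :
    BddBelow (Set.range fun i => quadForm A b (f i)) :=
  ⟨quadForm A b (A⁻¹ *ᵥ b), Set.forall_mem_range.2 fun i => hA.quadForm_inv_mulVec_le b (f i)⟩

end Matrix

lemma sum_smul_blockProj_apply {m nh : ℕ} (P : Fin m → Fin nh) (Θ : Fin nh → ℝ)
    (g : Fin m → ℝ) (i : Fin m) : (∑ n, Θ n • blockProj P n g) i = Θ (P i) * g i := by
  simp [blockProj, Finset.sum_apply, mul_ite]

lemma sum_smul_blockProj_extend {m p qn : ℕ} {P : Fin m → Fin p} {Q : Fin m → Fin qn}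
    (href : ∀ i j : Fin m, P i = P j → Q i = Q j) (Θ : Fin qn → ℝ) (g : Fin m → ℝ) :
    ∑ n, Function.extend P (Θ ∘ Q) 0 n • blockProj P n g = ∑ n, Θ n • blockProj Q n g := by
  have hfac : (Θ ∘ Q).FactorsThrough P := fun i j hij => congrArg Θ (href i j hij)
  funext i
  simp only [sum_smul_blockProj_apply, hfac.extend_apply, Function.comp_apply]

theorem stmt_3_general {m p qn : ℕ} (A : Matrix (Fin m) (Fin m) ℝ) (hA : A.PosDef)
    (b x : Fin m → ℝ) (g : Fin m → ℝ)
    (P : Fin m → Fin p)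
    (Q : Fin m → Fin qn)
    (href : ∀ i j : Fin m, P i = P j → Q i = Q j) :
    (⨅ Θ : Fin p → ℝ, quadForm A b (x + ∑ n, Θ n • blockProj P n g))
      ≤ ⨅ Θ : Fin qn → ℝ, quadForm A b (x + ∑ n, Θ n • blockProj Q n g) := by
  refine le_ciInf fun Θ => ?_
  rw [← sum_smul_blockProj_extend href Θ g]
  exact ciInf_le (hA.bddBelow_range_quadForm b _) _

/-- If the partition `P` refines the partition `Q` (every block of `Q` is a union of blocks
of `P`), then the infimum of the blockwise line-search function for `P` is at most that
for `Q`. -/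
theorem stmt_3 {m p qn : ℕ} (A : Matrix (Fin m) (Fin m) ℝ) (hA : A.PosDef)
    (b x : Fin m → ℝ) (g : Fin m → ℝ) (hg : g = A.mulVec x - b)
    (P : Fin m → Fin p) (hP : Function.Surjective P)
    (Q : Fin m → Fin qn) (hQ : Function.Surjective Q)
    (href : ∀ i j : Fin m, P i = P j → Q i = Q j) :
    (⨅ Θ : Fin p → ℝ, quadForm A b (x + ∑ n, Θ n • blockProj P n g))
      ≤ ⨅ Θ : Fin qn → ℝ, quadForm A b (x + ∑ n, Θ n • blockProj Q n g) :=
  stmt_3_general A hA b x g P Q href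
end

section
/- (Kantorovich matrix inequality) Let A be an m×m real symmetric positive definite matrix with smallest eigenvalue λ_min and largest eigenvalue λ_max. Then for every d ∈ ℝ^m, (dᵀAd)·(dᵀA⁻¹d) ≤ ((λ_max + λ_min)² / (4 λ_max λ_min)) · (dᵀd)². -/
/-!
Diagonalize `A = U diag(μ) Uᵀ` and put `c = Uᵀ d`. The three quadratic forms become
`S₁ = ∑ μᵢ cᵢ²`, `S₂ = ∑ μᵢ⁻¹ cᵢ²` and `S = ∑ cᵢ²`. For `μ ∈ [a, b]` with `a > 0`,
`(μ - a)(μ - b) ≤ 0` reads `μ + ab/μ ≤ a + b`, so `S₁ + ab S₂ ≤ (a + b) S`, and AM-GM gives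
`4ab S₁ S₂ ≤ (S₁ + ab S₂)² ≤ (a + b)² S²`.
-/

open Matrix

theorem Finset.sum_mul_sum_inv_mul_le {ι : Type*} (s : Finset ι) {μ w : ι → ℝ} {a b : ℝ}
    (ha : 0 < a) (hw : ∀ i ∈ s, 0 ≤ w i) (hμ : ∀ i ∈ s, μ i ∈ Set.Icc a b) :
    (∑ i ∈ s, μ i * w i) * (∑ i ∈ s, (μ i)⁻¹ * w i)
      ≤ (a + b) ^ 2 / (4 * a * b) * (∑ i ∈ s, w i) ^ 2 := by
  rcases s.eq_empty_or_nonempty with rfl | ⟨j, hj⟩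
  · simp
  have hb : 0 < b := ha.trans_le ((hμ j hj).1.trans (hμ j hj).2)
  set S₁ := ∑ i ∈ s, μ i * w i
  set S₂ := ∑ i ∈ s, (μ i)⁻¹ * w i
  have hsum : S₁ + a * b * S₂ ≤ (a + b) * ∑ i ∈ s, w i := by
    rw [Finset.mul_sum, Finset.mul_sum, ← Finset.sum_add_distrib]
    refine Finset.sum_le_sum fun i hi => ?_
    obtain ⟨hai, hib⟩ := hμ i hi
    have hμi : 0 < μ i := ha.trans_le hai
    have : μ i + a * b * (μ i)⁻¹ ≤ a + b := by
      rw [← div_eq_mul_inv, ← le_sub_iff_add_le', div_le_iff₀ hμi]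
      nlinarith
    calc μ i * w i + a * b * ((μ i)⁻¹ * w i) = (μ i + a * b * (μ i)⁻¹) * w i := by ring
      _ ≤ (a + b) * w i := mul_le_mul_of_nonneg_right this (hw i hi)
  have hS₁ : 0 ≤ S₁ := Finset.sum_nonneg fun i hi =>
    mul_nonneg (ha.le.trans (hμ i hi).1) (hw i hi)
  have hS₂ : 0 ≤ S₂ := Finset.sum_nonneg fun i hi =>
    mul_nonneg (inv_nonneg.2 (ha.le.trans (hμ i hi).1)) (hw i hi)
  rw [div_mul_eq_mul_div, le_div_iff₀ (by positivity)]
  calc S₁ * S₂ * (4 * a * b) = (S₁ + a * b * S₂) ^ 2 - (S₁ - a * b * S₂) ^ 2 := by ring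
    _ ≤ (S₁ + a * b * S₂) ^ 2 := sub_le_self _ (sq_nonneg _)
    _ ≤ ((a + b) * ∑ i ∈ s, w i) ^ 2 := pow_le_pow_left₀ (by positivity) hsum 2
    _ = (a + b) ^ 2 * (∑ i ∈ s, w i) ^ 2 := by ring

theorem Matrix.IsHermitian.dotProduct_cfc_mulVec {n : Type*} [Fintype n] [DecidableEq n]
    {A : Matrix n n ℝ} (hA : A.IsHermitian) (f : ℝ → ℝ) (d : n → ℝ) :
    d ⬝ᵥ cfc f A *ᵥ d =
      ∑ i, f (hA.eigenvalues i) * (star (hA.eigenvectorUnitary : Matrix n n ℝ) *ᵥ d) i ^ 2 := by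
  rw [hA.cfc_eq, IsHermitian.cfc, Unitary.conjStarAlgAut_apply, ← mulVec_mulVec, ← mulVec_mulVec,
    dotProduct_mulVec, ← mulVec_transpose, star_eq_conjTranspose,
    conjTranspose_eq_transpose_of_trivial]
  simp [dotProduct, mulVec_diagonal, sq, mul_left_comm]

theorem Matrix.PosDef.dotProduct_mulVec_mul_dotProduct_inv_mulVec_le {n : Type*} [Fintype n]
    [DecidableEq n] {A : Matrix n n ℝ} (hA : A.PosDef) {a b : ℝ} (ha : 0 < a)
    (hμ : ∀ i, hA.1.eigenvalues i ∈ Set.Icc a b) (d : n → ℝ) :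
    (d ⬝ᵥ A *ᵥ d) * (d ⬝ᵥ A⁻¹ *ᵥ d) ≤ (a + b) ^ 2 / (4 * a * b) * (d ⬝ᵥ d) ^ 2 := by
  have hsa : IsSelfAdjoint A := hA.1 -- picked up by the `cfc_tac` auto-params below
  have hA_cfc : A = cfc id A := (cfc_id ℝ A).symm
  have hinv_cfc : A⁻¹ = cfc (fun x : ℝ ↦ x⁻¹) A := by
    rw [nonsing_inv_eq_ringInverse, cfc_ringInverse_id (R := ℝ) A hA.isUnit]
  have hone_cfc : d ⬝ᵥ d = d ⬝ᵥ cfc (fun _ : ℝ ↦ 1) A *ᵥ d := by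
    rw [cfc_const_one ℝ A, one_mulVec]
  rw [hone_cfc, hinv_cfc]
  nth_rw 1 [hA_cfc]
  simp only [hA.1.dotProduct_cfc_mulVec, id, one_mul]
  exact Finset.univ.sum_mul_sum_inv_mul_le ha (fun i _ ↦ sq_nonneg _) fun i _ ↦ hμ i

/-- Kantorovich matrix inequality: if `A` is an `m×m` real SPD matrix with smallest
eigenvalue `λ_min` and largest eigenvalue `λ_max`, then for every `d ∈ ℝ^m`,
`(dᵀAd)(dᵀA⁻¹d) ≤ ((λ_max + λ_min)²/(4 λ_max λ_min)) (dᵀd)²`. -/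
theorem stmt_11 {m : ℕ} (A : Matrix (Fin m) (Fin m) ℝ) (hA : A.PosDef)
    (lmin lmax : ℝ)
    (hmin : lmin = ⨅ i, hA.1.eigenvalues i)
    (hmax : lmax = ⨆ i, hA.1.eigenvalues i) :
    ∀ d : Fin m → ℝ,
      (d ⬝ᵥ A.mulVec d) * (d ⬝ᵥ A⁻¹.mulVec d)
        ≤ ((lmax + lmin) ^ 2 / (4 * lmax * lmin)) * (d ⬝ᵥ d) ^ 2 := by
  intro d
  cases isEmpty_or_nonempty (Fin m)
  · simp [dotProduct]
  obtain ⟨i₀, hi₀⟩ := exists_eq_ciInf_of_finite (f := hA.1.eigenvalues)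
  have hmin_pos : 0 < lmin := hmin ▸ hi₀ ▸ hA.eigenvalues_pos i₀
  have hbounds : ∀ i, hA.1.eigenvalues i ∈ Set.Icc lmin lmax := fun i ↦
    ⟨hmin ▸ ciInf_le (Set.finite_range _).bddBelow i,
      hmax ▸ le_ciSup (Set.finite_range _).bddAbove i⟩
  convert hA.dotProduct_mulVec_mul_dotProduct_inv_mulVec_le hmin_pos hbounds d using 2
  ring
end

section
/- (Scalar Kantorovich inequality) Let n̂ ≥ 1, let α₁,…,α_{n̂} ≥ 0 with Σ_{n=1}^{n̂} α_n = 1, and let λ₁,…,λ_{n̂} > 0 with λ_min = min_n λ_n and λ_max = max_n λ_n. Then (Σ_{n=1}^{n̂} α_n λ_n) · (Σ_{n=1}^{n̂} α_n/λ_n) ≤ (λ_max + λ_min)² / (4 λ_max λ_min). -/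
/-!
For `m ≤ x ≤ M` we have `(x - m)(M - x) ≥ 0`, i.e. `x + mM/x ≤ m + M`. Averaging this with the
weights `α` gives `S + mM T ≤ m + M` for `S = Σ αₙ λₙ` and `T = Σ αₙ / λₙ`, and then AM-GM
bounds the product: `4 S (mM T) ≤ (S + mM T)² ≤ (m + M)²`.
-/

open Finset

lemma add_mul_div_le_add_of_mem_Icc {m M x : ℝ} (hm : 0 < m) (hx : x ∈ Set.Icc m M) :
    x + m * M / x ≤ m + M := by
  obtain ⟨hmx, hxM⟩ := hx
  have hx₀ : 0 < x := hm.trans_le hmx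
  have hfactor : 0 ≤ (x - m) * (M - x) := mul_nonneg (by linarith) (by linarith)
  have hdiv : m * M / x ≤ m + M - x := by
    rw [div_le_iff₀ hx₀]
    nlinarith
  linarith

lemma sum_mul_add_mul_sum_div_le {ι : Type*} (s : Finset ι) (α lam : ι → ℝ) {m M : ℝ}
    (hm : 0 < m) (hα : ∀ i ∈ s, 0 ≤ α i) (hsum : ∑ i ∈ s, α i = 1)
    (hlam : ∀ i ∈ s, lam i ∈ Set.Icc m M) :
    ∑ i ∈ s, α i * lam i + m * M * ∑ i ∈ s, α i / lam i ≤ m + M :=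
  calc ∑ i ∈ s, α i * lam i + m * M * ∑ i ∈ s, α i / lam i
      = ∑ i ∈ s, α i * (lam i + m * M / lam i) := by
        rw [mul_sum, ← sum_add_distrib]
        refine sum_congr rfl fun i _ => ?_
        ring
    _ ≤ ∑ i ∈ s, α i * (m + M) :=
        sum_le_sum fun i hi =>
          mul_le_mul_of_nonneg_left (add_mul_div_le_add_of_mem_Icc hm (hlam i hi)) (hα i hi)
    _ = m + M := by rw [← sum_mul, hsum, one_mul]

theorem sum_mul_mul_sum_div_le {ι : Type*} (s : Finset ι) (α lam : ι → ℝ) {m M : ℝ}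
    (hm : 0 < m) (hα : ∀ i ∈ s, 0 ≤ α i) (hsum : ∑ i ∈ s, α i = 1)
    (hlam : ∀ i ∈ s, lam i ∈ Set.Icc m M) :
    (∑ i ∈ s, α i * lam i) * (∑ i ∈ s, α i / lam i) ≤ (M + m) ^ 2 / (4 * M * m) := by
  set S := ∑ i ∈ s, α i * lam i
  set T := ∑ i ∈ s, α i / lam i
  obtain ⟨j, hj⟩ : s.Nonempty := nonempty_of_sum_ne_zero (hsum ▸ one_ne_zero)
  have hM : 0 < M := hm.trans_le ((hlam j hj).1.trans (hlam j hj).2)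
  have hlin : S + m * M * T ≤ m + M := sum_mul_add_mul_sum_div_le s α lam hm hα hsum hlam
  have hS : 0 ≤ S := sum_nonneg fun i hi =>
    mul_nonneg (hα i hi) (hm.trans_le (hlam i hi).1).le
  have hT : 0 ≤ T := sum_nonneg fun i hi =>
    div_nonneg (hα i hi) (hm.trans_le (hlam i hi).1).le
  have hamgm : 4 * S * (m * M * T) ≤ (m + M) ^ 2 :=
    (four_mul_le_sq_add S (m * M * T)).trans
      (pow_le_pow_left₀ (add_nonneg hS (by positivity)) hlin 2)
  rw [le_div_iff₀ (by positivity)]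
  linear_combination hamgm

theorem stmt_12_general {nh : ℕ}
    (α lam : Fin nh → ℝ)
    (hα : ∀ n, 0 ≤ α n) (hsum : ∑ n, α n = 1)
    (hlam : ∀ n, 0 < lam n)
    (lmin lmax : ℝ)
    (hmin : IsLeast (Set.range lam) lmin)
    (hmax : IsGreatest (Set.range lam) lmax) :
    (∑ n, α n * lam n) * (∑ n, α n / lam n)
      ≤ (lmax + lmin) ^ 2 / (4 * lmax * lmin) := by
  obtain ⟨⟨i, rfl⟩, hlb⟩ := hmin
  exact sum_mul_mul_sum_div_le univ α lam (hlam i) (fun n _ => hα n) hsum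
    fun n _ => ⟨hlb ⟨n, rfl⟩, hmax.2 ⟨n, rfl⟩⟩

/-- Scalar Kantorovich inequality: for nonnegative weights `α` summing to `1` and positive
reals `λₙ` with minimum `λ_min` and maximum `λ_max`,
`(Σ αₙ λₙ)(Σ αₙ/λₙ) ≤ (λ_max + λ_min)²/(4 λ_max λ_min)`. -/
theorem stmt_12 {nh : ℕ} (hnh : 1 ≤ nh)
    (α lam : Fin nh → ℝ)
    (hα : ∀ n, 0 ≤ α n) (hsum : ∑ n, α n = 1)
    (hlam : ∀ n, 0 < lam n)
    (lmin lmax : ℝ)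
    (hmin : IsLeast (Set.range lam) lmin)
    (hmax : IsGreatest (Set.range lam) lmax) :
    (∑ n, α n * lam n) * (∑ n, α n / lam n)
      ≤ (lmax + lmin) ^ 2 / (4 * lmax * lmin) :=
  stmt_12_general α lam hα hsum hlam lmin lmax hmin hmax
end
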